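/- Let A be an H-semiprime left H-module algebra over a Hopf algebra H, and let I be an H-stable two-sided ideal of A. Then the following are equivalent: (a) the left annihilator of I in A is zero; (b) I is an essential M_H(A)-submodule of A; (c) I is a dense M_H(A)-submodule of A (i.e. Hom_{M_H(A)}(L/I, A)=0 for every M_H(A)-submodule L of A containing I). -/

import Mathlib

open TensorProduct

noncomputable section

/-! ### Integrals in a Hopf algebra -/

/-- `t` is a left integral in `H`: `h * t = ε(h) • t` for all `h ∈ H`. -/
def IsLeftIntegral (R : Type*) {H : Type*} [CommRing R] [Ring H] [HopfAlgebra R H]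
    (t : H) : Prop :=
  ∀ h : H, h * t = Coalgebra.counit (R := R) h • t

/-- `t` is a right integral in `H`: `t * h = ε(h) • t` for all `h ∈ H`. -/
def IsRightIntegral (R : Type*) {H : Type*} [CommRing R] [Ring H] [HopfAlgebra R H]
    (t : H) : Prop :=
  ∀ h : H, t * h = Coalgebra.counit (R := R) h • t

/-! ### Module algebras -/

variable (R H A : Type*)

/-- Given an `H`-action `ρ` on `A` (an `R`-algebra map `H → End_R A`),
`pairAction ρ w` is the operator on `A ⊗ A` given, for `w = Σ x ⊗ y`, by
`a ⊗ b ↦ Σ (x • a) ⊗ (y • b)`. -/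
def pairAction [CommRing R] [Ring H] [HopfAlgebra R H] [Ring A] [Algebra R A]
    (ρ : H →ₐ[R] Module.End R A) :
    H ⊗[R] H →ₗ[R] A ⊗[R] A →ₗ[R] A ⊗[R] A :=
  (TensorProduct.homTensorHomMap (RingHom.id R) A A A A) ∘ₗ
    (TensorProduct.map ρ.toLinearMap ρ.toLinearMap)

/-- A left `H`-module algebra structure on an `R`-algebra `A`: an `H`-module structure
(an `R`-algebra map `ρ : H → End_R A`) such that multiplication and unit of `A` are
morphisms of `H`-modules, i.e. `h • (a b) = Σ_(h) (h₁ • a)(h₂ • b)` and `h • 1 = ε(h) 1`;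
in other words, `A` is an `R`-algebra in the category of left `H`-modules. -/
structure ModuleAlgebra [CommRing R] [Ring H] [HopfAlgebra R H] [Ring A] [Algebra R A] where
  ρ : H →ₐ[R] Module.End R A
  act_mul : ∀ (h : H) (a b : A),
    ρ h (a * b) = LinearMap.mul' R A (pairAction R H A ρ (Coalgebra.comul h) (a ⊗ₜ[R] b))
  act_one : ∀ h : H, ρ h 1 = algebraMap R A (Coalgebra.counit h)

variable {R H A}

/-- The set of `H`-invariant elements `A^H = {a | h • a = ε(h) a}` of a module algebra. -/
def ModuleAlgebra.invariants [CommRing R] [Ring H] [HopfAlgebra R H] [Ring A] [Algebra R A]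
    (ma : ModuleAlgebra R H A) : Set A :=
  {a : A | ∀ h : H, ma.ρ h a = Coalgebra.counit (R := R) h • a}

/-- The set of central `H`-invariant elements `Z(A)^H` of a module algebra. -/
def ModuleAlgebra.centralInvariants [CommRing R] [Ring H] [HopfAlgebra R H] [Ring A]
    [Algebra R A] (ma : ModuleAlgebra R H A) : Set A :=
  {a : A | (∀ b : A, a * b = b * a) ∧ ∀ h : H, ma.ρ h a = Coalgebra.counit (R := R) h • a}

/-- A subset `I ⊆ A` is `H`-stable if it is closed under the `H`-action. -/
def IsHStable [CommRing R] [Ring H] [HopfAlgebra R H] [Ring A] [Algebra R A]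
    (ma : ModuleAlgebra R H A) (I : Set A) : Prop :=
  ∀ h : H, ∀ x ∈ I, ma.ρ h x ∈ I

variable (R H A)

/-- `B` realises the smash product `A # H` of a left `H`-module algebra `A` with `H`:
`B` contains `A` and `H` as subalgebras, the multiplication map `A ⊗_R H → B`,
`a ⊗ h ↦ a·h` is an `R`-module isomorphism (so `B = A ⊗_R H` as `R`-module), and
`(1 # h)(a # 1) = Σ_(h) (h₁ • a) # h₂` holds, which forces the smash product
multiplication `(a # h)(b # g) = Σ_(h) a (h₁ • b) # h₂ g`. -/
structure SmashProductStructure [CommRing R] [Ring H] [HopfAlgebra R H] [Ring A] [Algebra R A]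
    (ma : ModuleAlgebra R H A) (B : Type*) [Ring B] [Algebra R B] where
  ιA : A →ₐ[R] B
  ιH : H →ₐ[R] B
  mul_bij : Function.Bijective
    ((LinearMap.mul' R B) ∘ₗ (TensorProduct.map ιA.toLinearMap ιH.toLinearMap))
  commute_rel : ∀ (h : H) (a : A),
    ιH h * ιA a =
      LinearMap.mul' R B
        ((TensorProduct.map (ιA.toLinearMap ∘ₗ ((LinearMap.flip ma.ρ.toLinearMap) a))
          ιH.toLinearMap) (Coalgebra.comul h))

variable {R H A}

/-! ### Ideals and semiprimeness -/

/-- The ordered product `a₁ ⋯ aₙ` of a nonempty family of ring elements,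
relative to a multiplication `μ`. -/
def nProd {A : Type*} (μ : A → A → A) : A → List A → A
  | a, [] => a
  | a, b :: l => μ a (nProd μ b l)

/-- `I` is a two-sided ideal of `A` (described as a set). -/
def IsIdealSet (A : Type*) [Ring A] (I : Set A) : Prop :=
  (0 : A) ∈ I ∧ (∀ x ∈ I, ∀ y ∈ I, x + y ∈ I) ∧
    ∀ a : A, ∀ x ∈ I, a * x ∈ I ∧ x * a ∈ I

/-- `I` is a two-sided ideal with respect to a (possibly twisted) multiplication `μ`. -/
def IsIdealSetMul {A : Type*} [Ring A] (μ : A → A → A) (I : Set A) : Prop :=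
  (0 : A) ∈ I ∧ (∀ x ∈ I, ∀ y ∈ I, x + y ∈ I) ∧
    ∀ a : A, ∀ x ∈ I, μ a x ∈ I ∧ μ x a ∈ I

/-- `I` is a nilpotent ideal with respect to the multiplication `μ`: some power `Iⁿ`
vanishes, i.e. all products of `n + 1` elements of `I` are zero. -/
def IsNilpotentMulSet {A : Type*} [Zero A] (μ : A → A → A) (I : Set A) : Prop :=
  ∃ n : ℕ, ∀ f : Fin (n + 1) → A, (∀ i, f i ∈ I) →
    nProd μ (f 0) (List.ofFn fun i : Fin n => f i.succ) = 0

/-- A ring is semiprime if it has no nonzero nilpotent two-sided ideal. -/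
def RingIsSemiprime (A : Type*) [Ring A] : Prop :=
  ∀ I : Set A, IsIdealSet A I → IsNilpotentMulSet (· * ·) I → I ⊆ {0}

/-- A module algebra is `H`-semiprime if it has no nonzero nilpotent `H`-stable
two-sided ideal. -/
def IsHSemiprime [CommRing R] [Ring H] [HopfAlgebra R H] [Ring A] [Algebra R A]
    (ma : ModuleAlgebra R H A) : Prop :=
  ∀ I : Set A, IsIdealSet A I → IsHStable ma I → IsNilpotentMulSet (· * ·) I → I ⊆ {0}

/-! The left annihilator `l(I)` of an `H`-stable ideal `I` is again an `H`-stable ideal, since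
`(h • a) x = Σ h₁ • (a (S h₂ • x))`; and `I ∩ l(I)` squares to zero, so in an `H`-semiprime
algebra it vanishes, which gives (b) ⇒ (a). For (a) ⇒ (c): if `f` vanishes on `I` and `x ∈ L`,
then `f x` annihilates `I` because `f(x) y = f(x y) = 0`. For (c) ⇒ (b): if `I ∩ J = 0`, the
projection `I ⊕ J → J` is an `M_H(A)`-map on `I + J` vanishing on `I`, hence zero, so `J = 0`. -/

open Pointwise

namespace IsIdealSet

variable {A : Type*} [Ring A] {I J : Set A}

theorem neg_mem (hI : IsIdealSet A I) {x : A} (hx : x ∈ I) : -x ∈ I := by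
  simpa using (hI.2.2 (-1) x hx).1

theorem sub_mem (hI : IsIdealSet A I) {x y : A} (hx : x ∈ I) (hy : y ∈ I) : x - y ∈ I := by
  simpa [sub_eq_add_neg] using hI.2.1 x hx _ (hI.neg_mem hy)

theorem inter (hI : IsIdealSet A I) (hJ : IsIdealSet A J) : IsIdealSet A (I ∩ J) :=
  ⟨⟨hI.1, hJ.1⟩, fun x hx y hy => ⟨hI.2.1 x hx.1 y hy.1, hJ.2.1 x hx.2 y hy.2⟩,
    fun a x hx => ⟨⟨(hI.2.2 a x hx.1).1, (hJ.2.2 a x hx.2).1⟩,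
      ⟨(hI.2.2 a x hx.1).2, (hJ.2.2 a x hx.2).2⟩⟩⟩

theorem add (hI : IsIdealSet A I) (hJ : IsIdealSet A J) : IsIdealSet A (I + J) := by
  refine ⟨⟨0, hI.1, 0, hJ.1, add_zero 0⟩, ?_, ?_⟩
  · rintro _ ⟨u, hu, v, hv, rfl⟩ _ ⟨u', hu', v', hv', rfl⟩
    exact ⟨_, hI.2.1 u hu u' hu', _, hJ.2.1 v hv v' hv', add_add_add_comm u u' v v'⟩
  · rintro a _ ⟨u, hu, v, hv, rfl⟩
    exact ⟨⟨_, (hI.2.2 a u hu).1, _, (hJ.2.2 a v hv).1, (mul_add a u v).symm⟩,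
      ⟨_, (hI.2.2 a u hu).2, _, (hJ.2.2 a v hv).2, (add_mul u v a).symm⟩⟩

end IsIdealSet

def leftAnnihilator {A : Type*} [Ring A] (I : Set A) : Set A :=
  {a | ∀ x ∈ I, a * x = 0}

theorem isIdealSet_leftAnnihilator {A : Type*} [Ring A] {I : Set A}
    (hI : ∀ a, ∀ x ∈ I, a * x ∈ I) : IsIdealSet A (leftAnnihilator I) := by
  refine ⟨fun x _ => zero_mul x, fun a ha b hb x hx => ?_, fun c a ha => ⟨fun x hx => ?_,
    fun x hx => ?_⟩⟩
  · rw [add_mul, ha x hx, hb x hx, add_zero]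
  · rw [mul_assoc, ha x hx, mul_zero]
  · rw [mul_assoc, ha _ (hI c x hx)]

theorem isNilpotentMulSet_of_mul_eq_zero {A : Type*} [Ring A] {K : Set A}
    (hK : ∀ x ∈ K, ∀ y ∈ K, x * y = 0) : IsNilpotentMulSet (· * ·) K :=
  ⟨1, fun f hf => by simpa [nProd] using hK _ (hf 0) _ (hf 1)⟩

section Projection

variable {A : Type*} [Ring A] {I J : Set A}

/-- The projection `I ⊕ J → J`, extended by `0` outside `I + J`. -/
def sumProjRight (I J : Set A) : A → A :=
  Function.extend (fun p : I × J => (p.1 : A) + p.2) (fun p => (p.2 : A)) 0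

theorem sumProjRight_add_eq (hI : IsIdealSet A I) (hJ : IsIdealSet A J) (hIJ : I ∩ J ⊆ {0})
    {u v : A} (hu : u ∈ I) (hv : v ∈ J) : sumProjRight I J (u + v) = v := by
  have hinj : Function.Injective (fun p : I × J => (p.1 : A) + p.2) := by
    rintro ⟨⟨u, hu⟩, ⟨v, hv⟩⟩ ⟨⟨u', hu'⟩, ⟨v', hv'⟩⟩ (huv : u + v = u' + v')
    have hdiff : u - u' = v' - v := by
      rw [sub_eq_sub_iff_add_eq_add, huv, add_comm]
    have hu0 : u - u' = 0 := hIJ ⟨hI.sub_mem hu hu', hdiff ▸ hJ.sub_mem hv' hv⟩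
    have hv0 : v' - v = 0 := hdiff ▸ hu0
    rw [sub_eq_zero] at hu0 hv0
    subst hu0 hv0
    rfl
  exact hinj.extend_apply _ _ (⟨u, hu⟩, ⟨v, hv⟩)

theorem sumProjRight_add (hI : IsIdealSet A I) (hJ : IsIdealSet A J) (hIJ : I ∩ J ⊆ {0})
    {x y : A} (hx : x ∈ I + J) (hy : y ∈ I + J) :
    sumProjRight I J (x + y) = sumProjRight I J x + sumProjRight I J y := by
  obtain ⟨u, hu, v, hv, rfl⟩ := hx
  obtain ⟨u', hu', v', hv', rfl⟩ := hy
  rw [add_add_add_comm, sumProjRight_add_eq hI hJ hIJ (hI.2.1 u hu u' hu') (hJ.2.1 v hv v' hv'),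
    sumProjRight_add_eq hI hJ hIJ hu hv, sumProjRight_add_eq hI hJ hIJ hu' hv']

theorem sumProjRight_map (hI : IsIdealSet A I) (hJ : IsIdealSet A J) (hIJ : I ∩ J ⊆ {0})
    (φ : A →+ A) (hφI : ∀ u ∈ I, φ u ∈ I) (hφJ : ∀ v ∈ J, φ v ∈ J) {x : A} (hx : x ∈ I + J) :
    sumProjRight I J (φ x) = φ (sumProjRight I J x) := by
  obtain ⟨u, hu, v, hv, rfl⟩ := hx
  rw [map_add, sumProjRight_add_eq hI hJ hIJ (hφI u hu) (hφJ v hv),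
    sumProjRight_add_eq hI hJ hIJ hu hv]

end Projection

section ModuleAlgebra

variable [CommRing R] [Ring H] [HopfAlgebra R H] [Ring A] [Algebra R A]

theorem ModuleAlgebra.act_mul_eq_mul'_map (ma : ModuleAlgebra R H A) (h : H) (a b : A) :
    ma.ρ h (a * b) = LinearMap.mul' R A
      (TensorProduct.map (ma.ρ.toLinearMap.flip a) (ma.ρ.toLinearMap.flip b)
        (Coalgebra.comul h)) := by
  rw [ma.act_mul]
  induction Coalgebra.comul (R := R) h using TensorProduct.induction_on with
  | zero => simp
  | tmul g k => simp [pairAction]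
  | add u v hu hv => simp only [map_add, LinearMap.add_apply, hu, hv]

/-- In Sweedler notation, `(h • a) x = Σ h₁ • (a (S h₂ • x))`: expanding the right-hand side
gives `Σ (h₁ • a) (h₂ S(h₃) • x) = Σ (h₁ • a) ε(h₂) x`. -/
theorem ModuleAlgebra.act_mul_eq_lift_comul (ma : ModuleAlgebra R H A) (a x : A) (h : H) :
    ma.ρ h a * x = TensorProduct.lift ma.ρ.toLinearMap
      ((LinearMap.mulLeft R a ∘ₗ ma.ρ.toLinearMap.flip x ∘ₗ HopfAlgebra.antipode R).lTensor H
        (Coalgebra.comul h)) := by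
  set Φ : H ⊗[R] (H ⊗[R] H) →ₗ[R] A := LinearMap.mul' R A ∘ₗ TensorProduct.map
    (ma.ρ.toLinearMap.flip a)
    (ma.ρ.toLinearMap.flip x ∘ₗ LinearMap.mul' R H ∘ₗ (HopfAlgebra.antipode R).lTensor H)
  have hexpand : ∀ w : H ⊗[R] H, TensorProduct.lift ma.ρ.toLinearMap
      ((LinearMap.mulLeft R a ∘ₗ ma.ρ.toLinearMap.flip x ∘ₗ HopfAlgebra.antipode R).lTensor H w)
      = Φ (TensorProduct.assoc R H H H ((Coalgebra.comul (R := R)).rTensor H w)) := by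
    intro w
    induction w using TensorProduct.induction_on with
    | zero => simp
    | tmul g k =>
      simp only [LinearMap.lTensor_tmul, TensorProduct.lift.tmul, LinearMap.rTensor_tmul,
        LinearMap.comp_apply, LinearMap.mulLeft_apply, AlgHom.toLinearMap_apply,
        ma.act_mul_eq_mul'_map]
      induction Coalgebra.comul (R := R) g using TensorProduct.induction_on with
      | zero => simp
      | tmul g₁ g₂ => simp [Φ]
      | add u v hu hv => simp only [map_add, TensorProduct.add_tmul, hu, hv]
    | add u v hu hv => simp only [map_add, hu, hv]
  have hantipode : Φ ∘ₗ (Coalgebra.comul (R := R)).lTensor H = LinearMap.mul' R A ∘ₗ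
      TensorProduct.map (ma.ρ.toLinearMap.flip a)
        (LinearMap.toSpanSingleton R A x ∘ₗ Coalgebra.counit) := by
    ext g k
    simp [Φ]
  calc ma.ρ h a * x
      = (LinearMap.mul' R A ∘ₗ TensorProduct.map (ma.ρ.toLinearMap.flip a)
          (LinearMap.toSpanSingleton R A x ∘ₗ Coalgebra.counit)) (Coalgebra.comul h) := by
        rw [← LinearMap.map_comp_lTensor]
        simp only [LinearMap.comp_apply, Coalgebra.lTensor_counit_comul, TensorProduct.map_tmul,
          LinearMap.toSpanSingleton_apply, one_smul, LinearMap.mul'_apply, LinearMap.flip_apply,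
          AlgHom.toLinearMap_apply]
    _ = Φ (TensorProduct.assoc R H H H ((Coalgebra.comul (R := R)).rTensor H
          (Coalgebra.comul h))) := by
        rw [← hantipode, Coalgebra.coassoc_apply, LinearMap.comp_apply]
    _ = _ := (hexpand _).symm

theorem IsHStable.leftAnnihilator {ma : ModuleAlgebra R H A} {I : Set A}
    (hIs : IsHStable ma I) : IsHStable ma (leftAnnihilator I) := by
  intro h a ha x hx
  have hzero : LinearMap.mulLeft R a ∘ₗ ma.ρ.toLinearMap.flip x ∘ₗ HopfAlgebra.antipode R = 0 :=
    LinearMap.ext fun k => ha _ (hIs _ x hx)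
  rw [ma.act_mul_eq_lift_comul, hzero, LinearMap.lTensor_zero, LinearMap.zero_apply, map_zero]

theorem IsHStable.inter {ma : ModuleAlgebra R H A} {I J : Set A}
    (hI : IsHStable ma I) (hJ : IsHStable ma J) : IsHStable ma (I ∩ J) :=
  fun h x hx => ⟨hI h x hx.1, hJ h x hx.2⟩

theorem IsHStable.add {ma : ModuleAlgebra R H A} {I J : Set A}
    (hI : IsHStable ma I) (hJ : IsHStable ma J) : IsHStable ma (I + J) := by
  rintro h _ ⟨u, hu, v, hv, rfl⟩
  exact ⟨_, hI h u hu, _, hJ h v hv, (map_add _ u v).symm⟩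

theorem IsHSemiprime.inter_leftAnnihilator_subset {ma : ModuleAlgebra R H A}
    (hA : IsHSemiprime ma) {I : Set A} (hI : IsIdealSet A I) (hIs : IsHStable ma I) :
    I ∩ leftAnnihilator I ⊆ {0} :=
  hA _ (hI.inter (isIdealSet_leftAnnihilator fun a x hx => (hI.2.2 a x hx).1))
    (hIs.inter hIs.leftAnnihilator)
    (isNilpotentMulSet_of_mul_eq_zero fun _ hx _ hy => hx.2 _ hy.1)

end ModuleAlgebra

theorem hstable_ideal_annihilator_essential_dense_tfae
    {R H A : Type*} [CommRing R] [Ring H] [HopfAlgebra R H] [Ring A] [Algebra R A]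
    (ma : ModuleAlgebra R H A) (hA : IsHSemiprime ma)
    (I : Set A) (hI : IsIdealSet A I) (hIs : IsHStable ma I) :
    List.TFAE [
      -- (a) zero left annihilator
      ∀ a : A, (∀ x ∈ I, a * x = 0) → a = 0,
      -- (b) essential M_H(A)-submodule
      ∀ J : Set A, IsIdealSet A J → IsHStable ma J → (∃ x ∈ J, x ≠ 0) →
        ∃ x : A, x ≠ 0 ∧ x ∈ I ∧ x ∈ J,
      -- (c) dense M_H(A)-submodule
      ∀ L : Set A, IsIdealSet A L → IsHStable ma L → I ⊆ L →
        ∀ f : A → A,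
          (∀ x ∈ L, ∀ y ∈ L, f (x + y) = f x + f y) →
          (∀ a : A, ∀ x ∈ L, f (a * x) = a * f x) →
          (∀ a : A, ∀ x ∈ L, f (x * a) = f x * a) →
          (∀ h : H, ∀ x ∈ L, f (ma.ρ h x) = ma.ρ h (f x)) →
          (∀ x ∈ I, f x = 0) →
          ∀ x ∈ L, f x = 0] := by
  tfae_have 1 → 3 := by
    intro hann L _ _ _ f _ _ hf_mul_right _ hfI x hx
    refine hann _ fun y hy => ?_
    rw [← hf_mul_right y x hx]
    exact hfI _ (hI.2.2 x y hy).1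
  tfae_have 3 → 2 := by
    intro hdense J hJ hJs ⟨y, hyJ, hy0⟩
    by_contra! hIJ
    have hIJ : I ∩ J ⊆ {0} := fun x hx => by_contra fun hx0 => hIJ x hx0 hx.1 hx.2
    have hproj {u v : A} (hu : u ∈ I) (hv : v ∈ J) : sumProjRight I J (u + v) = v :=
      sumProjRight_add_eq hI hJ hIJ hu hv
    have hy : sumProjRight I J y = y := by simpa using hproj hI.1 hyJ
    refine hy0 (hy ▸ hdense (I + J) (hI.add hJ) (hIs.add hJs) (Set.subset_add_left I hJ.1)
      (sumProjRight I J) (fun x hx y hy => sumProjRight_add hI hJ hIJ hx hy)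
      (fun a x hx => sumProjRight_map hI hJ hIJ (AddMonoidHom.mulLeft a)
        (fun u hu => (hI.2.2 a u hu).1) (fun v hv => (hJ.2.2 a v hv).1) hx)
      (fun a x hx => sumProjRight_map hI hJ hIJ (AddMonoidHom.mulRight a)
        (fun u hu => (hI.2.2 a u hu).2) (fun v hv => (hJ.2.2 a v hv).2) hx)
      (fun h x hx => sumProjRight_map hI hJ hIJ (ma.ρ h).toAddMonoidHom (hIs h) (hJs h) hx)
      (fun x hx => by simpa using hproj hx hJ.1) y (Set.subset_add_right J hI.1 hyJ))
  tfae_have 2 → 1 := by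
    intro hess a ha
    by_contra ha0
    obtain ⟨z, hz0, hzI, hzJ⟩ := hess (leftAnnihilator I)
      (isIdealSet_leftAnnihilator fun b x hx => (hI.2.2 b x hx).1) hIs.leftAnnihilator
      ⟨a, ha, ha0⟩
    exact hz0 (hA.inter_leftAnnihilator_subset hI hIs ⟨hzI, hzJ⟩)
  tfae_finish

end
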